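/- arXiv:0802.1283 — 3 statements merged into one kernel-verified Lean document; each statement's English description precedes it below -/
import Mathlib

section
/- If a, b, c are pairwise orthogonal imaginary octonions, then (a × b) × c = -a × (b × c). -/
/-!
Octonions via Cayley–Dickson doubling of the quaternions.
An octonion is a pair (a, b) of quaternions representing a + e·b.
-/

noncomputable section

open Quaternion

/-- The octonions, as pairs of quaternions (Cayley–Dickson doubling). -/
abbrev Oct := ℍ × ℍ

namespace Oct

/-- Octonion multiplication (Cayley–Dickson). -/
def omul (x y : Oct) : Oct :=
  (x.1 * y.1 - star y.2 * x.2, y.2 * x.1 + x.2 * star y.1)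

/-- Octonion conjugation. -/
def oconj (x : Oct) : Oct := (star x.1, -x.2)

/-- Imaginary part: Im x = (x - x̄)/2. -/
def im (x : Oct) : Oct := (2 : ℝ)⁻¹ • (x - oconj x)

/-- `x` is an imaginary octonion. -/
def IsIm (x : Oct) : Prop := oconj x = -x

/-- The standard inner product on the octonions. -/
def oinner (x y : Oct) : ℝ := (inner ℝ x.1 y.1 : ℝ) + (inner ℝ x.2 y.2 : ℝ)

/-- The cross product on imaginary octonions: u × v = Im(v̄ · u). -/
def cross (u v : Oct) : Oct := im (omul (oconj v) u)

/-- The associator [u,v,w] = ((u·v)·w − u·(v·w))/2. -/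
def assoc3 (u v w : Oct) : Oct :=
  (2 : ℝ)⁻¹ • (omul (omul u v) w - omul u (omul v w))

/-- The 3-form φ₀(u,v,w) = ⟨u × v, w⟩. -/
def phi (u v w : Oct) : ℝ := oinner (cross u v) w

/-- The 4-form ψ₀(u,v,w,x) = ⟨u, [v,w,x]⟩/2. -/
def psi (u v w x : Oct) : ℝ := oinner u (assoc3 v w x) / 2

end Oct

open Oct in
theorem cross_assoc_anti (a b c : Oct) (ha : IsIm a) (hb : IsIm b) (hc : IsIm c)
    (hab : oinner a b = 0) (hac : oinner a c = 0) (hbc : oinner b c = 0) :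
    cross (cross a b) c = -cross a (cross b c) := by
  have ha1 : a.1.re = 0 := by
    have := congrArg (fun p : Oct => p.1.re) ha
    simp [Oct.oconj] at this; linarith
  have hb1 : b.1.re = 0 := by
    have := congrArg (fun p : Oct => p.1.re) hb
    simp [Oct.oconj] at this; linarith
  have hc1 : c.1.re = 0 := by
    have := congrArg (fun p : Oct => p.1.re) hc
    simp [Oct.oconj] at this; linarith
  obtain ⟨a1, a2⟩ := a
  obtain ⟨b1, b2⟩ := b
  obtain ⟨c1, c2⟩ := c
  simp only at ha1 hb1 hc1
  simp only [oinner, Quaternion.inner_def, Quaternion.re_mul, Quaternion.re_star,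
    Quaternion.imI_star, Quaternion.imJ_star, Quaternion.imK_star, ha1, hb1, hc1] at hab hac hbc
  simp only [Oct.cross, Oct.im, Oct.omul, Oct.oconj, Prod.ext_iff, Prod.fst_sub, Prod.snd_sub,
    Prod.smul_fst, Prod.smul_snd, Prod.fst_neg, Prod.snd_neg, Quaternion.ext_iff,
    Quaternion.re_mul, Quaternion.imI_mul, Quaternion.imJ_mul, Quaternion.imK_mul,
    Quaternion.re_add, Quaternion.imI_add, Quaternion.imJ_add, Quaternion.imK_add,
    Quaternion.re_sub, Quaternion.imI_sub, Quaternion.imJ_sub, Quaternion.imK_sub,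
    Quaternion.re_neg, Quaternion.imI_neg, Quaternion.imJ_neg, Quaternion.imK_neg,
    Quaternion.re_star, Quaternion.imI_star, Quaternion.imJ_star, Quaternion.imK_star,
    Quaternion.re_smul, Quaternion.imI_smul, Quaternion.imJ_smul, Quaternion.imK_smul,
    smul_eq_mul, ha1, hb1, hc1]
  refine ⟨⟨?_, ?_, ?_, ?_⟩, ?_, ?_, ?_, ?_⟩
  · ring
  · linear_combination (2*b1.imI)*hac - c1.imI*hab - a1.imI*hbc
  · linear_combination (2*b1.imJ)*hac - c1.imJ*hab - a1.imJ*hbc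
  · linear_combination (2*b1.imK)*hac - c1.imK*hab - a1.imK*hbc
  · linear_combination (2*b2.re)*hac - c2.re*hab - a2.re*hbc
  · linear_combination (2*b2.imI)*hac - c2.imI*hab - a2.imI*hbc
  · linear_combination (2*b2.imJ)*hac - c2.imJ*hab - a2.imJ*hbc
  · linear_combination (2*b2.imK)*hac - c2.imK*hab - a2.imK*hbc
end
end

section
/- Let (u,v,w) be an orthonormal associative triple of imaginary octonions (i.e. w = u × v), and let a be an imaginary octonion orthogonal to u, v, w. Then ⟨u × a, a × v⟩ = 0. -/
/-!
Octonions via Cayley–Dickson doubling of the quaternions.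
An octonion is a pair (a, b) of quaternions representing a + e·b.
-/

noncomputable section

open Quaternion

section AuxCrossLemmas

open Oct

private lemma quat_inner_expand (x y : ℍ) :
    (inner ℝ x y : ℝ) = x.re*y.re + x.imI*y.imI + x.imJ*y.imJ + x.imK*y.imK := by
  rw [Quaternion.inner_def, Quaternion.re_mul]
  simp only [Quaternion.re_star, Quaternion.imI_star, Quaternion.imJ_star, Quaternion.imK_star]
  ring

private lemma cross_inner_key (u v a : Oct) (hu : IsIm u) (hv : IsIm v) (ha : IsIm a) :
    oinner (cross u a) (cross a v) = oinner a u * oinner a v - oinner a a * oinner u v := by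
  obtain ⟨u1,u2⟩ := u; obtain ⟨v1,v2⟩ := v; obtain ⟨a1,a2⟩ := a
  have hu1 : u1.re = 0 := by
    have := congrArg (fun p : Oct => p.1.re) hu; simp [oconj] at this; linarith
  have hv1 : v1.re = 0 := by
    have := congrArg (fun p : Oct => p.1.re) hv; simp [oconj] at this; linarith
  have ha1 : a1.re = 0 := by
    have := congrArg (fun p : Oct => p.1.re) ha; simp [oconj] at this; linarith
  simp only [cross, Oct.im, omul, oconj, oinner, quat_inner_expand, Prod.smul_fst, Prod.smul_snd,
    Prod.fst_sub, Prod.snd_sub, Prod.fst_neg, Prod.snd_neg, smul_eq_mul,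
    Quaternion.re_mul, Quaternion.imI_mul, Quaternion.imJ_mul, Quaternion.imK_mul,
    Quaternion.re_star, Quaternion.imI_star, Quaternion.imJ_star, Quaternion.imK_star,
    Quaternion.re_neg, Quaternion.imI_neg, Quaternion.imJ_neg, Quaternion.imK_neg,
    Quaternion.re_sub, Quaternion.imI_sub, Quaternion.imJ_sub, Quaternion.imK_sub,
    Quaternion.re_smul, Quaternion.imI_smul, Quaternion.imJ_smul, Quaternion.imK_smul,
    Quaternion.re_add, Quaternion.imI_add, Quaternion.imJ_add, Quaternion.imK_add]
  simp only [hu1, hv1, ha1]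
  ring

end AuxCrossLemmas

open Oct in
theorem cross_ua_av_orth (u v w a : Oct)
    (hu : IsIm u) (hv : IsIm v) (hw : IsIm w) (ha : IsIm a)
    (huu : oinner u u = 1) (hvv : oinner v v = 1) (hww : oinner w w = 1)
    (huv : oinner u v = 0) (huw : oinner u w = 0) (hvw : oinner v w = 0)
    (hassoc : w = cross u v)
    (hau : oinner a u = 0) (hav : oinner a v = 0) (haw : oinner a w = 0) :
    oinner (cross u a) (cross a v) = 0 := by
  rw [cross_inner_key u v a hu hv ha, hau, huv]
  ring
end
end

section
/- Let u, v be orthonormal imaginary octonions, w := u × v, and a a unit imaginary octonion orthogonal to u, v, w, u×a, v×a, w×a. Set α := a - i·(u×a), β := -v × (a + i·(u×a)) in the complexification of Im 𝕆, where u× is extended complex-linearly. Then u × α = i·α and u × β = i·β, i.e. α and β are +i-eigenvectors of the complex-linear extension of the map x ↦ u × x. -/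
/-!
Octonions via Cayley–Dickson doubling of the quaternions.
An octonion is a pair (a, b) of quaternions representing a + e·b.
-/

noncomputable section

open Quaternion

namespace Oct

/-- The complexification of the octonions: a pair (x, y) stands for x + i·y. -/
abbrev OctC := Oct × Oct

/-- Multiplication by the imaginary unit i on the complexification. -/
def Ci (z : OctC) : OctC := (-z.2, z.1)

/-- Complex-linear extension of the cross product with a (real) octonion u. -/
def crossC (u : Oct) (z : OctC) : OctC := (cross u z.1, cross u z.2)

/-- Inclusion of the octonions into their complexification. -/
def toC (x : Oct) : OctC := (x, 0)

end Oct

namespace Oct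

theorem isIm_re {x : Oct} (hx : IsIm x) : x.1.re = 0 := by
  have := congrArg (fun y : Oct => y.1.re) hx
  simp [oconj] at this; linarith

theorem cross_neg (u x : Oct) : cross u (-x) = -cross u x := by
  ext <;>
    simp only [cross, Oct.im, omul, oconj, Prod.fst_mul, Prod.snd_mul, Prod.smul_fst,
      Prod.smul_snd, Prod.fst_sub, Prod.snd_sub, Prod.fst_neg, Prod.snd_neg,
      Quaternion.re_mul, Quaternion.imI_mul, Quaternion.imJ_mul, Quaternion.imK_mul,
      Quaternion.re_star, Quaternion.imI_star, Quaternion.imJ_star, Quaternion.imK_star,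
      Quaternion.re_sub, Quaternion.imI_sub, Quaternion.imJ_sub, Quaternion.imK_sub,
      Quaternion.re_neg, Quaternion.imI_neg, Quaternion.imJ_neg, Quaternion.imK_neg,
      Quaternion.re_add, Quaternion.imI_add, Quaternion.imJ_add, Quaternion.imK_add,
      Quaternion.re_smul, Quaternion.imI_smul, Quaternion.imJ_smul, Quaternion.imK_smul,
      smul_eq_mul] <;> ring

theorem L1 (u a : Oct) (hu : IsIm u) (ha : IsIm a) :
    cross u (cross u a) = oinner a u • u - oinner u u • a := by
  have hu1 := isIm_re hu
  have ha1 := isIm_re ha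
  ext <;>
    simp only [cross, Oct.im, omul, oconj, oinner, Quaternion.inner_def,
      Prod.fst_mul, Prod.snd_mul, Prod.smul_fst,
      Prod.smul_snd, Prod.fst_sub, Prod.snd_sub, Prod.fst_neg, Prod.snd_neg,
      Quaternion.re_mul, Quaternion.imI_mul, Quaternion.imJ_mul, Quaternion.imK_mul,
      Quaternion.re_star, Quaternion.imI_star, Quaternion.imJ_star, Quaternion.imK_star,
      Quaternion.re_sub, Quaternion.imI_sub, Quaternion.imJ_sub, Quaternion.imK_sub,
      Quaternion.re_neg, Quaternion.imI_neg, Quaternion.imJ_neg, Quaternion.imK_neg,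
      Quaternion.re_add, Quaternion.imI_add, Quaternion.imJ_add, Quaternion.imK_add,
      Quaternion.re_smul, Quaternion.imI_smul, Quaternion.imJ_smul, Quaternion.imK_smul,
      smul_eq_mul, hu1, ha1] <;> ring

theorem L2 (u v a : Oct) (hu : IsIm u) (hv : IsIm v) (ha : IsIm a) :
    cross u (cross v a) + cross v (cross u a)
      = oinner a u • v + oinner a v • u - (2 * oinner u v) • a := by
  have hu1 := isIm_re hu
  have hv1 := isIm_re hv
  have ha1 := isIm_re ha
  ext <;>
    simp only [cross, Oct.im, omul, oconj, oinner, Quaternion.inner_def,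
      Prod.fst_mul, Prod.snd_mul, Prod.smul_fst, Prod.fst_add, Prod.snd_add,
      Prod.smul_snd, Prod.fst_sub, Prod.snd_sub, Prod.fst_neg, Prod.snd_neg,
      Quaternion.re_mul, Quaternion.imI_mul, Quaternion.imJ_mul, Quaternion.imK_mul,
      Quaternion.re_star, Quaternion.imI_star, Quaternion.imJ_star, Quaternion.imK_star,
      Quaternion.re_sub, Quaternion.imI_sub, Quaternion.imJ_sub, Quaternion.imK_sub,
      Quaternion.re_neg, Quaternion.imI_neg, Quaternion.imJ_neg, Quaternion.imK_neg,
      Quaternion.re_add, Quaternion.imI_add, Quaternion.imJ_add, Quaternion.imK_add,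
      Quaternion.re_smul, Quaternion.imI_smul, Quaternion.imJ_smul, Quaternion.imK_smul,
      smul_eq_mul, hu1, hv1, ha1] <;> ring

set_option maxHeartbeats 4000000 in
theorem L3 (u v a : Oct) (hu : IsIm u) (hv : IsIm v) (ha : IsIm a) :
    cross u (cross v (cross u a))
      = oinner u u • cross v a - oinner a u • cross v u
        - oinner a (cross u v) • u - (2 * oinner u v) • cross u a := by
  have hu1 := isIm_re hu
  have hv1 := isIm_re hv
  have ha1 := isIm_re ha
  ext <;>
    simp only [cross, Oct.im, omul, oconj, oinner, Quaternion.inner_def,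
      Prod.fst_mul, Prod.snd_mul, Prod.smul_fst, Prod.fst_add, Prod.snd_add,
      Prod.smul_snd, Prod.fst_sub, Prod.snd_sub, Prod.fst_neg, Prod.snd_neg,
      Quaternion.re_mul, Quaternion.imI_mul, Quaternion.imJ_mul, Quaternion.imK_mul,
      Quaternion.re_star, Quaternion.imI_star, Quaternion.imJ_star, Quaternion.imK_star,
      Quaternion.re_sub, Quaternion.imI_sub, Quaternion.imJ_sub, Quaternion.imK_sub,
      Quaternion.re_neg, Quaternion.imI_neg, Quaternion.imJ_neg, Quaternion.imK_neg,
      Quaternion.re_add, Quaternion.imI_add, Quaternion.imJ_add, Quaternion.imK_add,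
      Quaternion.re_smul, Quaternion.imI_smul, Quaternion.imJ_smul, Quaternion.imK_smul,
      smul_eq_mul, hu1, hv1, ha1] <;> ring

end Oct

open Oct in
theorem alpha_beta_eigenvectors (u v w a : Oct)
    (hu : IsIm u) (hv : IsIm v) (ha : IsIm a)
    (huu : oinner u u = 1) (hvv : oinner v v = 1) (huv : oinner u v = 0)
    (hw : w = cross u v)
    (haa : oinner a a = 1)
    (hau : oinner a u = 0) (hav : oinner a v = 0) (haw : oinner a w = 0)
    (haua : oinner a (cross u a) = 0) (hava : oinner a (cross v a) = 0)
    (hawa : oinner a (cross w a) = 0) :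
    crossC u (toC a - Ci (toC (cross u a))) = Ci (toC a - Ci (toC (cross u a))) ∧
    crossC u (-(crossC v (toC a + Ci (toC (cross u a)))))
      = Ci (-(crossC v (toC a + Ci (toC (cross u a))))) := by
  have haw' : oinner a (cross u v) = 0 := hw ▸ haw
  have h1 : cross u (cross u a) = -a := by
    rw [L1 u a hu ha, hau, huu]; simp
  have h2 : cross v (cross u a) = -cross u (cross v a) := by
    have h := L2 u v a hu hv ha
    rw [hau, hav, huv] at h
    simp only [zero_smul, mul_zero, add_zero, zero_add, sub_zero] at h
    exact eq_neg_of_add_eq_zero_right h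
  have h3 : cross u (cross v (cross u a)) = cross v a := by
    rw [L3 u v a hu hv ha, huu, hau, haw', huv]
    simp
  constructor
  · simp only [toC, Ci, crossC, Prod.mk_sub_mk, neg_zero, sub_zero, zero_sub,
      Prod.mk.injEq, cross_neg, h1, neg_neg]
  · simp only [toC, Ci, crossC, Prod.mk_add_mk, neg_zero, add_zero, zero_add,
      Prod.neg_mk, Prod.mk.injEq, cross_neg, neg_neg]
    exact ⟨h2.symm, by rw [h3]⟩
end
end
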